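/- For integers n ≥ k > ℓ ≥ 0 and positive reals α and Γ with α ≥ Γ, the function f(d) = ∑_{i=ℓ+1}^{k} min{(d-i+1)·(Γ/d), α} is nondecreasing in d on k ≤ d ≤ n-1, hence attains its maximum over k ≤ d ≤ n-1 at d = n-1. -/

import Mathlib

/-- Bandwidth-limited regime: with α ≥ Γ and β = Γ/d, the upper bound
f(d) = ∑_{i=ℓ+1}^{k} min{(d-i+1)·(Γ/d), α} is nondecreasing in d on k ≤ d ≤ n-1,
hence attains its maximum at d = n-1. -/
theorem stmt0 (n k ℓ : ℕ) (Γ α : ℝ) (hΓ : 0 < Γ) (hα : Γ ≤ α) (hℓ : ℓ < k)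
    (f : ℕ → ℝ)
    (hf : ∀ d : ℕ, f d = ∑ i ∈ Finset.Icc (ℓ + 1) k,
      min (((d : ℝ) - i + 1) * (Γ / d)) α) :
    (∀ d₁ d₂ : ℕ, k ≤ d₁ → d₁ ≤ d₂ → d₂ ≤ n - 1 → f d₁ ≤ f d₂) ∧
    (∀ d : ℕ, k ≤ d → d ≤ n - 1 → f d ≤ f (n - 1)) := by
  have key : ∀ d₁ d₂ : ℕ, k ≤ d₁ → d₁ ≤ d₂ → f d₁ ≤ f d₂ := by
    intro d₁ d₂ hk h12
    rw [hf, hf]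
    apply Finset.sum_le_sum
    intro i hi
    simp only [Finset.mem_Icc] at hi
    have hi1 : 1 ≤ i := by omega
    have hd1 : 0 < d₁ := by omega
    have hd1' : (0:ℝ) < d₁ := by exact_mod_cast hd1
    have hd2' : (0:ℝ) < d₂ := by exact_mod_cast lt_of_lt_of_le hd1 h12
    have h12' : (d₁:ℝ) ≤ d₂ := by exact_mod_cast h12
    apply min_le_min _ le_rfl
    rw [mul_div_assoc', mul_div_assoc', div_le_div_iff₀ hd1' hd2']
    have hi' : (1:ℝ) ≤ i := by exact_mod_cast hi1
    nlinarith [mul_le_mul_of_nonneg_left h12' (sub_nonneg.mpr hi'), hΓ.le]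
  refine ⟨fun d₁ d₂ h1 h2 _ => key d₁ d₂ h1 h2, fun d h1 h2 => key d (n-1) h1 h2⟩
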